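/- Let S be an N×N Hermitian positive definite matrix with eigenvalues s₁,…,s_N and let d > 0 satisfy d ≤ N·min_i s_i. Among all N×N Hermitian positive definite matrices K with K ⪯ S and tr(K) = d, the minimum of log det(S K⁻¹) is attained at K = (d/N)·I, giving minimum value log det(S) - N·log(d/N). -/

import Mathlib

/-!
The objective equals `log det S - log det K`, so one has to maximise `log det K = ∑ log λᵢ(K)`
under `∑ λᵢ(K) = d`. By concavity of `log` (AM–GM) this is at most `N log (d / N)`, with equality
for `K = (d / N) • 1`, which satisfies `K ⪯ S` exactly because `d / N` lies below every
eigenvalue of `S`.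
-/

open Matrix
open scoped ComplexOrder

theorem Real.sum_log_le_card_mul_log_mean {ι : Type*} {s : Finset ι} (hs : s.Nonempty)
    {x : ι → ℝ} (hx : ∀ i ∈ s, 0 < x i) :
    ∑ i ∈ s, Real.log (x i) ≤ s.card * Real.log ((∑ i ∈ s, x i) / s.card) := by
  have hcard : (0 : ℝ) < s.card := by exact_mod_cast hs.card_pos
  have hjensen := strictConcaveOn_log_Ioi.concaveOn.le_map_sum (t := s)
    (w := fun _ ↦ (s.card : ℝ)⁻¹) (p := x) (fun _ _ ↦ by positivity) (by simp [hcard.ne']) hx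
  simp only [smul_eq_mul, inv_mul_eq_div, ← Finset.sum_div] at hjensen
  rwa [← div_le_iff₀' hcard]

namespace Matrix

variable {n 𝕜 : Type*} [Fintype n] [DecidableEq n] [RCLike 𝕜]

theorem IsHermitian.re_det_eq_prod_eigenvalues {A : Matrix n n 𝕜} (hA : A.IsHermitian) :
    RCLike.re A.det = ∏ i, hA.eigenvalues i := by
  rw [hA.det_eq_prod_eigenvalues, ← RCLike.ofReal_prod, RCLike.ofReal_re]

-- No invertibility is needed: for singular `B` both sides are `0`.
theorem IsHermitian.re_det_mul_inv {A B : Matrix n n 𝕜} (hA : A.IsHermitian)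
    (hB : B.IsHermitian) :
    RCLike.re (A * B⁻¹).det = RCLike.re A.det / RCLike.re B.det := by
  rw [det_mul, det_nonsing_inv, Ring.inverse_eq_inv', hA.det_eq_prod_eigenvalues,
    hB.det_eq_prod_eigenvalues, ← RCLike.ofReal_prod, ← RCLike.ofReal_prod, ← RCLike.ofReal_inv,
    ← RCLike.ofReal_mul, RCLike.ofReal_re, RCLike.ofReal_re, RCLike.ofReal_re, div_eq_mul_inv]

theorem PosDef.re_det_pos {A : Matrix n n 𝕜} (hA : A.PosDef) : 0 < RCLike.re A.det := by
  rw [hA.1.re_det_eq_prod_eigenvalues]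
  exact Finset.prod_pos fun i _ ↦ hA.eigenvalues_pos i

theorem PosDef.log_re_det_le_card_mul_log_trace_div_card [Nonempty n] {A : Matrix n n 𝕜}
    (hA : A.PosDef) :
    Real.log (RCLike.re A.det) ≤
      Fintype.card n * Real.log (RCLike.re A.trace / Fintype.card n) := by
  have htrace : RCLike.re A.trace = ∑ i, hA.1.eigenvalues i := by
    rw [hA.1.trace_eq_sum_eigenvalues, ← RCLike.ofReal_sum, RCLike.ofReal_re]
  rw [hA.1.re_det_eq_prod_eigenvalues, htrace, Real.log_prod fun i _ ↦ (hA.eigenvalues_pos i).ne']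
  exact Real.sum_log_le_card_mul_log_mean Finset.univ_nonempty fun i _ ↦ hA.eigenvalues_pos i

open scoped MatrixOrder in
theorem IsHermitian.posSemidef_sub_smul_one {A : Matrix n n 𝕜} (hA : A.IsHermitian) {c : ℝ}
    (hc : ∀ i, c ≤ hA.eigenvalues i) : (A - (c : 𝕜) • 1).PosSemidef := by
  have hle : algebraMap ℝ (Matrix n n 𝕜) c ≤ A := by
    rw [algebraMap_le_iff_le_spectrum hA, hA.spectrum_real_eq_range_eigenvalues]
    rintro _ ⟨i, rfl⟩
    exact hc i
  rwa [Algebra.algebraMap_eq_smul_one, RCLike.real_smul_eq_coe_smul (K := 𝕜), le_iff] at hle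

end Matrix

/-- Reverse water-filling: for S Hermitian positive definite with eigenvalues sᵢ and
0 < d ≤ N·minᵢ sᵢ, among Hermitian positive definite K with K ⪯ S and tr K = d,
log det(S K⁻¹) is minimized by K = (d/N)·I, with minimum log det S - N log(d/N). -/
theorem stmt_10 (N : ℕ) (hN : 0 < N) (S : Matrix (Fin N) (Fin N) ℂ) (hS : S.PosDef)
    (d : ℝ) (hd : 0 < d) (hdmin : ∀ i, d ≤ N * hS.1.eigenvalues i) :
    (∀ K : Matrix (Fin N) (Fin N) ℂ, K.PosDef → (S - K).PosSemidef → K.trace = (d : ℂ) →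
      Real.log S.det.re - (N : ℝ) * Real.log (d / N) ≤ Real.log ((S * K⁻¹).det.re)) ∧
    ((((d / N : ℝ) : ℂ) • (1 : Matrix (Fin N) (Fin N) ℂ)).PosDef ∧
      (S - ((d / N : ℝ) : ℂ) • 1).PosSemidef ∧
      ((((d / N : ℝ) : ℂ) • (1 : Matrix (Fin N) (Fin N) ℂ)).trace = (d : ℂ)) ∧
      Real.log ((S * ((((d / N : ℝ) : ℂ) • (1 : Matrix (Fin N) (Fin N) ℂ))⁻¹)).det.re)
        = Real.log S.det.re - (N : ℝ) * Real.log (d / N)) := by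
  have : Nonempty (Fin N) := Fin.pos_iff_nonempty.mp hN
  have hNR : (0 : ℝ) < N := by exact_mod_cast hN
  have hquot (K : Matrix (Fin N) (Fin N) ℂ) (hK : K.PosDef) :
      Real.log (S * K⁻¹).det.re = Real.log S.det.re - Real.log K.det.re :=
    (congrArg Real.log (hS.1.re_det_mul_inv hK.1)).trans
      (Real.log_div hS.re_det_pos.ne' hK.re_det_pos.ne')
  have hUniform : (((d / N : ℝ) : ℂ) • (1 : Matrix (Fin N) (Fin N) ℂ)).PosDef :=
    PosDef.one.smul (Complex.zero_lt_real.mpr (div_pos hd hNR))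
  refine ⟨fun K hK _ htr ↦ ?_, hUniform, ?_, ?_, ?_⟩
  · have hlogdet : Real.log K.det.re ≤ N * Real.log (d / N) := by
      simpa [htr] using hK.log_re_det_le_card_mul_log_trace_div_card
    linarith [hquot K hK]
  · exact hS.1.posSemidef_sub_smul_one fun i ↦ (div_le_iff₀' hNR).mpr (hdmin i)
  · simp [trace_smul, hN.ne']
  · rw [hquot _ hUniform, det_smul, det_one, Fintype.card_fin, mul_one, ← Complex.ofReal_pow,
      Complex.ofReal_re, Real.log_pow]
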